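/- There is a universal constant c > 0 such that the following holds for every horizon T ≥ 1: if the adversary outputs T bits that are independent and uniformly distributed on {0,1} (independent of the forecaster's predictions), then every (possibly randomized, adaptive) forecaster satisfies E[calerr(T)] ≥ c·√T. -/

import Mathlib

open scoped Classical

/-- A transcript of play: the list of (prediction, bit) pairs so far, earliest first. -/
abbrev Transcript : Type := List (ℝ × Bool)

/-- `Δ h p` is the bias `m_p - n_p * p` of prediction value `p` in transcript `h`. -/
noncomputable def bias (h : Transcript) (p : ℝ) : ℝ :=
  ((h.filter fun x => decide (x.1 = p ∧ x.2 = true)).length : ℝ)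
    - ((h.filter fun x => decide (x.1 = p)).length : ℝ) * p

/-- The calibration error of a transcript. -/
noncomputable def calErr (h : Transcript) : ℝ :=
  ∑ p ∈ (h.map Prod.fst).toFinset, |bias h p|

/-- Bernoulli distribution on `Bool` with parameter `p` (junk if `p > 1` or `p < 0`). -/
noncomputable def bern (p : ℝ) : PMF Bool :=
  if h : ENNReal.ofReal p ≤ 1 then PMF.bernoulli p.toNNReal (ENNReal.coe_le_one_iff.mp h) else PMF.pure true

/-- Distribution over transcripts after `T` steps, where the forecaster samples a prediction
from `F h` and the adversary simultaneously samples a bit from `A h`. -/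
noncomputable def playDist (F : Transcript → PMF ℝ) (A : Transcript → PMF Bool) :
    ℕ → PMF Transcript
  | 0 => PMF.pure []
  | T + 1 => (playDist F A T).bind fun h =>
      (F h).bind fun p => (A h).map fun b => h ++ [(p, b)]

/-- Expected calibration error after `T` steps. -/
noncomputable def expCalErr (F : Transcript → PMF ℝ) (A : Transcript → PMF Bool) (T : ℕ) : ℝ :=
  ∑' h : Transcript, (playDist F A T h).toReal * calErr h

/-- Probability of an event under a PMF on transcripts. -/
noncomputable def prEvent (μ : PMF Transcript) (E : Transcript → Prop) : ℝ :=
  (∑' h : Transcript, if E h then μ h else 0).toReal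

/-- maximum cumulative calibration error over all prefixes of a transcript. -/
noncomputable def maxCalErr (h : Transcript) : ℝ :=
  (Finset.range (h.length + 1)).sup' (by simp) fun t => calErr (h.take t)

/-- Play with an adversary that may stop early (`none`); second component records stopping. -/
noncomputable def playStop (F : Transcript → PMF ℝ) (A : Transcript → PMF (Option Bool)) :
    ℕ → PMF (Transcript × Bool)
  | 0 => PMF.pure ([], false)
  | T + 1 => (playStop F A T).bind fun s =>
      if s.2 then PMF.pure s
      else (A s.1).bind fun ob =>
        match ob with
        | none => PMF.pure (s.1, true)
        | some b => (F s.1).map fun p => (s.1 ++ [(p, b)], false)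

namespace CalProof

noncomputable def sg (p : ℝ) : ℝ := if p ≤ 1/2 then 1 else -1

lemma sg_sq (p : ℝ) : sg p ^ 2 = 1 := by unfold sg; split <;> norm_num
lemma abs_sg (p : ℝ) : |sg p| = 1 := by unfold sg; split <;> simp

noncomputable def yval (x : ℝ × Bool) : ℝ := sg x.1 * ((if x.2 then 1 else 0) - 1/2)
noncomputable def dval (x : ℝ × Bool) : ℝ := |1/2 - x.1|
noncomputable def fval (x : ℝ × Bool) : ℝ := sg x.1 * ((if x.2 then 1 else 0) - x.1)

lemma fval_eq (x : ℝ × Bool) : fval x = yval x + dval x := by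
  unfold fval yval dval sg
  rcases le_or_gt x.1 (1/2) with h | h
  · rw [if_pos h, abs_of_nonneg (by linarith)]; ring
  · rw [if_neg (not_le.mpr h), abs_of_nonpos (by linarith)]; ring

noncomputable def Wsum (h : Transcript) : ℝ := (h.map yval).sum
noncomputable def Dsum (h : Transcript) : ℝ := (h.map dval).sum
noncomputable def Gsum (h : Transcript) : ℝ := (h.map fval).sum

lemma Wsum_cons (x : ℝ × Bool) (t : Transcript) : Wsum (x :: t) = yval x + Wsum t := by
  simp [Wsum]
lemma Wsum_append (h : Transcript) (x : ℝ × Bool) : Wsum (h ++ [x]) = Wsum h + yval x := by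
  simp [Wsum]

lemma abs_yval (x : ℝ × Bool) : |yval x| = 1/2 := by
  unfold yval
  rcases x with ⟨p, b⟩
  cases b <;> simp [abs_mul, abs_sg] <;> norm_num

lemma abs_Wsum_le (h : Transcript) : |Wsum h| ≤ (h.length : ℝ)/2 := by
  induction h with
  | nil => simp [Wsum]
  | cons x t ih =>
    rw [Wsum_cons]
    have := abs_add_le (yval x) (Wsum t)
    rw [abs_yval] at this
    push_cast [List.length_cons]
    linarith

lemma Dsum_nonneg (h : Transcript) : 0 ≤ Dsum h := by
  apply List.sum_nonneg
  intro x hx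
  rcases List.mem_map.mp hx with ⟨y, _, rfl⟩
  exact abs_nonneg _

lemma Dsum_le (h : Transcript) (hx : ∀ x ∈ h, x.1 ∈ Set.Icc (0:ℝ) 1) :
    Dsum h ≤ (h.length : ℝ)/2 := by
  induction h with
  | nil => simp [Dsum]
  | cons x t ih =>
    have h1 : dval x ≤ 1/2 := by
      have := hx x List.mem_cons_self
      unfold dval
      rw [abs_le]
      constructor <;> [linarith [this.2]; linarith [this.1]]
    have h2 := ih (fun y hy => hx y (List.mem_cons_of_mem x hy))
    have : Dsum (x :: t) = dval x + Dsum t := by simp [Dsum]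
    rw [this]
    push_cast [List.length_cons]
    linarith

lemma Gsum_eq (h : Transcript) : Gsum h = Wsum h + Dsum h := by
  induction h with
  | nil => simp [Gsum, Wsum, Dsum]
  | cons x t ih =>
    have : Gsum (x :: t) = fval x + Gsum t := by simp [Gsum]
    rw [this, ih, fval_eq, Wsum_cons]
    have : Dsum (x :: t) = dval x + Dsum t := by simp [Dsum]
    rw [this]; ring

lemma sum_fiber (u : ℝ × Bool → ℝ) (h : Transcript) :
    ∑ p ∈ (h.map Prod.fst).toFinset,
      ((h.filter fun x => decide (x.1 = p)).map u).sum = (h.map u).sum := by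
  induction h with
  | nil => simp
  | cons x t ih =>
    have key : ∀ p : ℝ, (((x :: t).filter fun y => decide (y.1 = p)).map u).sum
        = (if x.1 = p then u x else 0) + ((t.filter fun y => decide (y.1 = p)).map u).sum := by
      intro p
      by_cases hx : x.1 = p
      · simp [List.filter_cons, hx]
      · simp [List.filter_cons, hx]
    simp only [List.map_cons, List.toFinset_cons, List.sum_cons]
    rw [Finset.sum_congr rfl (fun p _ => key p), Finset.sum_add_distrib]
    congr 1
    · rw [Finset.sum_ite_eq]
      simp
    · by_cases hm : x.1 ∈ (t.map Prod.fst).toFinset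
      · rw [Finset.insert_eq_self.mpr hm]; exact ih
      · rw [Finset.sum_insert hm]
        have hnil : (t.filter fun y => decide (y.1 = x.1)) = [] := by
          apply List.filter_eq_nil_iff.mpr
          intro y hy
          simp only [decide_eq_true_eq]
          intro hc
          exact hm (List.mem_toFinset.mpr (List.mem_map.mpr ⟨y, hy, hc⟩))
        rw [hnil]
        simpa using ih


lemma bias_eq (h : Transcript) (p : ℝ) :
    bias h p = ((h.filter fun x => decide (x.1 = p)).map
      (fun x => (if x.2 then (1:ℝ) else 0) - p)).sum := by
  induction h with
  | nil => simp [bias]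
  | cons x t ih =>
    unfold bias at ih ⊢
    by_cases h1 : x.1 = p
    · by_cases h2 : x.2 = true
      · simp only [List.filter_cons, h1, h2] at ih ⊢
        simp [h2] at ih ⊢
        push_cast
        linarith [ih]
      · simp only [List.filter_cons, h1, h2] at ih ⊢
        simp [h2] at ih ⊢
        push_cast
        linarith [ih]
    · simp only [List.filter_cons, h1] at ih ⊢
      simp [h1] at ih ⊢
      push_cast
      linarith [ih]

lemma Gsum_grouped (h : Transcript) :
    Gsum h = ∑ p ∈ (h.map Prod.fst).toFinset, sg p * bias h p := by
  rw [Gsum, ← sum_fiber fval h]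
  apply Finset.sum_congr rfl
  intro p hp
  rw [bias_eq]
  have hmem : ∀ x ∈ h.filter fun x => decide (x.1 = p), x.1 = p := by
    intro x hx
    have := List.of_mem_filter hx
    simpa using this
  have : ((h.filter fun x => decide (x.1 = p)).map fval)
      = ((h.filter fun x => decide (x.1 = p)).map
          fun x => sg p * ((if x.2 then (1:ℝ) else 0) - p)) := by
    apply List.map_congr_left
    intro x hx
    rw [fval, hmem x hx]
  rw [this, ← List.sum_map_mul_left]

lemma abs_Gsum_le_calErr (h : Transcript) : |Gsum h| ≤ calErr h := by
  rw [Gsum_grouped, calErr]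
  refine le_trans (Finset.abs_sum_le_sum_abs _ _) ?_
  apply Finset.sum_le_sum
  intro p _
  rw [abs_mul, abs_sg, one_mul]

lemma list_len_filter_mono (p : ℝ) (h : Transcript) :
    ((h.filter fun x => decide (x.1 = p ∧ x.2 = true)).length : ℝ)
      ≤ ((h.filter fun x => decide (x.1 = p)).length : ℝ) := by
  have hsub : List.Sublist (h.filter fun x => decide (x.1 = p ∧ x.2 = true))
      (h.filter fun x => decide (x.1 = p)) := by
    apply List.monotone_filter_right
    intro a ha
    simp only [decide_eq_true_eq] at ha ⊢
    exact ha.1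
  exact_mod_cast hsub.length_le

lemma calErr_nonneg (h : Transcript) : 0 ≤ calErr h :=
  Finset.sum_nonneg fun _ _ => abs_nonneg _

lemma sum_fiber_len (h : Transcript) :
    ∑ p ∈ (h.map Prod.fst).toFinset,
      ((h.filter fun x => decide (x.1 = p)).length : ℝ) = (h.length : ℝ) := by
  have := sum_fiber (fun _ => (1:ℝ)) h
  have hgen : ∀ l : Transcript, ((l.map fun _ => (1:ℝ)).sum) = (l.length : ℝ) := by
    intro l; induction l with
    | nil => simp
    | cons a t ih => simp [ih]; ring
  rw [hgen] at this
  rw [← this]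
  apply Finset.sum_congr rfl
  intro p _
  rw [hgen]

lemma calErr_le (h : Transcript) (hx : ∀ x ∈ h, x.1 ∈ Set.Icc (0:ℝ) 1) :
    calErr h ≤ 2 * (h.length : ℝ) := by
  have hb : ∀ p ∈ (h.map Prod.fst).toFinset,
      |bias h p| ≤ 2 * ((h.filter fun x => decide (x.1 = p)).length : ℝ) := by
    intro p hp
    have hp01 : p ∈ Set.Icc (0:ℝ) 1 := by
      rcases List.mem_map.mp (List.mem_toFinset.mp hp) with ⟨x, hxh, rfl⟩
      exact hx x hxh
    have hmono := list_len_filter_mono p h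
    have hnn : (0:ℝ) ≤ ((h.filter fun x => decide (x.1 = p ∧ x.2 = true)).length : ℝ) := by
      positivity
    have hnn2 : (0:ℝ) ≤ ((h.filter fun x => decide (x.1 = p)).length : ℝ) := by positivity
    rw [bias, abs_le]
    constructor
    · nlinarith [hp01.1, hp01.2]
    · nlinarith [hp01.1, hp01.2]
  calc calErr h ≤ ∑ p ∈ (h.map Prod.fst).toFinset,
        2 * ((h.filter fun x => decide (x.1 = p)).length : ℝ) := Finset.sum_le_sum hb
    _ = 2 * ∑ p ∈ (h.map Prod.fst).toFinset,
        ((h.filter fun x => decide (x.1 = p)).length : ℝ) := by rw [Finset.mul_sum]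
    _ = 2 * (h.length : ℝ) := by rw [sum_fiber_len]

noncomputable def pexp {α : Type*} (μ : PMF α) (g : α → ℝ) : ℝ := ∑' a, (μ a).toReal * g a

lemma pmf_apply_ne_top {α : Type*} (μ : PMF α) (a : α) : μ a ≠ ⊤ :=
  ne_of_lt (lt_of_le_of_lt (PMF.coe_le_one μ a) (by norm_num))

lemma pmf_summable {α : Type*} (μ : PMF α) : Summable fun a => (μ a).toReal :=
  ENNReal.summable_toReal (by rw [μ.tsum_coe]; exact ENNReal.one_ne_top)

lemma pmf_tsum_toReal {α : Type*} (μ : PMF α) : ∑' a, (μ a).toReal = 1 := by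
  rw [← ENNReal.tsum_toReal_eq (fun a => pmf_apply_ne_top μ a), μ.tsum_coe, ENNReal.toReal_one]

lemma pexp_summable {α : Type*} (μ : PMF α) (g : α → ℝ) (C : ℝ)
    (hg : ∀ a ∈ μ.support, |g a| ≤ C) : Summable fun a => (μ a).toReal * g a := by
  apply Summable.of_abs
  apply Summable.of_nonneg_of_le (fun a => abs_nonneg _) (fun a => ?_)
    ((pmf_summable μ).mul_right C)
  by_cases h : μ a = 0
  · simp [h]
  · rw [abs_mul, abs_of_nonneg ENNReal.toReal_nonneg]
    exact mul_le_mul_of_nonneg_left (hg a h) ENNReal.toReal_nonneg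

lemma pexp_congr {α : Type*} (μ : PMF α) (g₁ g₂ : α → ℝ)
    (h : ∀ a ∈ μ.support, g₁ a = g₂ a) : pexp μ g₁ = pexp μ g₂ := by
  apply tsum_congr
  intro a
  by_cases ha : μ a = 0
  · simp [ha]
  · rw [h a ha]

lemma pexp_mono {α : Type*} (μ : PMF α) (g₁ g₂ : α → ℝ)
    (hs₁ : Summable fun a => (μ a).toReal * g₁ a) (hs₂ : Summable fun a => (μ a).toReal * g₂ a)
    (h : ∀ a ∈ μ.support, g₁ a ≤ g₂ a) : pexp μ g₁ ≤ pexp μ g₂ := by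
  apply Summable.tsum_le_tsum _ hs₁ hs₂
  intro a
  by_cases ha : μ a = 0
  · simp [ha]
  · exact mul_le_mul_of_nonneg_left (h a ha) ENNReal.toReal_nonneg

lemma pexp_add {α : Type*} (μ : PMF α) (g₁ g₂ : α → ℝ)
    (hs₁ : Summable fun a => (μ a).toReal * g₁ a) (hs₂ : Summable fun a => (μ a).toReal * g₂ a) :
    pexp μ (fun a => g₁ a + g₂ a) = pexp μ g₁ + pexp μ g₂ := by
  unfold pexp
  rw [← Summable.tsum_add hs₁ hs₂]
  exact tsum_congr fun a => by ring

lemma pexp_smul {α : Type*} (μ : PMF α) (g : α → ℝ) (r : ℝ) :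
    pexp μ (fun a => r * g a) = r * pexp μ g := by
  unfold pexp
  rw [← tsum_mul_left]
  exact tsum_congr fun a => by ring

lemma pexp_const {α : Type*} (μ : PMF α) (c : ℝ) : pexp μ (fun _ => c) = c := by
  unfold pexp
  rw [tsum_mul_right, pmf_tsum_toReal, one_mul]

lemma pexp_add_const {α : Type*} (μ : PMF α) (x : α → ℝ) (c C : ℝ)
    (hx : ∀ a ∈ μ.support, |x a| ≤ C) :
    pexp μ (fun a => x a + c) = pexp μ x + c := by
  rw [pexp_add μ x (fun _ => c) (pexp_summable μ x C hx)
    (pexp_summable μ _ |c| (fun a _ => le_refl _)), pexp_const]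

noncomputable def eexp {α : Type*} (μ : PMF α) (g : α → ℝ) : ENNReal :=
  ∑' a, μ a * ENNReal.ofReal (g a)

lemma eexp_le {α : Type*} (μ : PMF α) (g : α → ℝ) (C : ℝ) (hC : ∀ a, g a ≤ C) :
    eexp μ g ≤ ENNReal.ofReal C := by
  calc eexp μ g ≤ ∑' a, μ a * ENNReal.ofReal C :=
        ENNReal.tsum_le_tsum fun a => mul_le_mul_right (ENNReal.ofReal_le_ofReal (hC a)) _
    _ = ENNReal.ofReal C := by rw [ENNReal.tsum_mul_right, μ.tsum_coe, one_mul]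

lemma eexp_ne_top {α : Type*} (μ : PMF α) (g : α → ℝ) (C : ℝ) (hC : ∀ a, g a ≤ C) :
    eexp μ g ≠ ⊤ :=
  ne_of_lt (lt_of_le_of_lt (eexp_le μ g C hC) ENNReal.ofReal_lt_top)

lemma pexp_eq_toReal_eexp {α : Type*} (μ : PMF α) (g : α → ℝ) (h0 : ∀ a, 0 ≤ g a) :
    pexp μ g = (eexp μ g).toReal := by
  rw [eexp, ENNReal.tsum_toReal_eq
    (fun a => ENNReal.mul_ne_top (pmf_apply_ne_top μ a) ENNReal.ofReal_ne_top)]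
  exact tsum_congr fun a => by rw [ENNReal.toReal_mul, ENNReal.toReal_ofReal (h0 a)]

lemma pexp_bind {α β : Type*} (μ : PMF α) (K : α → PMF β) (g : β → ℝ) (C : ℝ)
    (h0 : ∀ b, 0 ≤ g b) (hC : ∀ b, g b ≤ C) :
    pexp (μ.bind K) g = pexp μ (fun a => pexp (K a) g) := by
  have h1 : eexp (μ.bind K) g = ∑' a, μ a * eexp (K a) g := by
    unfold eexp
    calc ∑' b, (μ.bind K) b * ENNReal.ofReal (g b)
        = ∑' b, ∑' a, μ a * K a b * ENNReal.ofReal (g b) := by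
          apply tsum_congr; intro b
          rw [PMF.bind_apply, ENNReal.tsum_mul_right]
      _ = ∑' a, ∑' b, μ a * K a b * ENNReal.ofReal (g b) := ENNReal.tsum_comm
      _ = ∑' a, μ a * ∑' b, K a b * ENNReal.ofReal (g b) := by
          apply tsum_congr; intro a
          rw [← ENNReal.tsum_mul_left]
          exact tsum_congr fun b => by ring
  rw [pexp_eq_toReal_eexp _ _ h0, h1, ENNReal.tsum_toReal_eq
    (fun a => ENNReal.mul_ne_top (pmf_apply_ne_top μ a) (eexp_ne_top _ g C hC))]
  exact tsum_congr fun a => by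
    beta_reduce
    rw [ENNReal.toReal_mul, pexp_eq_toReal_eexp _ _ h0]

lemma pexp_pure {α : Type*} (a : α) (g : α → ℝ) : pexp (PMF.pure a) g = g a := by
  unfold pexp
  rw [tsum_eq_single a (fun b hb => by rw [PMF.pure_apply, if_neg hb]; simp)]
  rw [PMF.pure_apply, if_pos rfl]
  simp

lemma pexp_map {α β : Type*} (ν : PMF α) (f : α → β) (g : β → ℝ) (C : ℝ)
    (h0 : ∀ b, 0 ≤ g b) (hC : ∀ b, g b ≤ C) :
    pexp (ν.map f) g = pexp ν (fun a => g (f a)) := by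
  rw [PMF.map, pexp_bind ν _ g C h0 hC]
  apply pexp_congr
  intro a _
  exact pexp_pure (f a) g

lemma pexp_bern_half (g : Bool → ℝ) :
    pexp (bern (1/2)) g = (g true + g false) / 2 := by
  have hle : ENNReal.ofReal (1/2 : ℝ) ≤ 1 := by
    rw [ENNReal.ofReal_le_one]; norm_num
  have hhalf : ENNReal.ofReal (1/2 : ℝ) = 1/2 := by
    rw [ENNReal.ofReal_div_of_pos (by norm_num), ENNReal.ofReal_one, ENNReal.ofReal_ofNat]
  unfold bern
  rw [dif_pos hle]
  unfold pexp
  rw [tsum_bool, PMF.bernoulli_apply, PMF.bernoulli_apply]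
  simp only [Bool.cond_false, Bool.cond_true]
  have hc : (((1/2:ℝ).toNNReal : NNReal) : ENNReal) = ENNReal.ofReal (1/2) := rfl
  rw [ENNReal.coe_sub, ENNReal.coe_one, hc, ENNReal.toReal_sub_of_le hle ENNReal.one_ne_top, ENNReal.toReal_one,
    ENNReal.toReal_ofReal (by norm_num : (0:ℝ) ≤ 1/2)]
  ring

/-- support of playDist -/
lemma playDist_support (F : Transcript → PMF ℝ) (A : Transcript → PMF Bool)
    (P : Set ℝ) (hF : ∀ h, (F h).support ⊆ P) :
    ∀ T h, h ∈ (playDist F A T).support → h.length = T ∧ ∀ x ∈ h, x.1 ∈ P := by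
  intro T
  induction T with
  | zero =>
    intro h hh
    rw [show playDist F A 0 = PMF.pure [] from rfl, PMF.support_pure] at hh
    subst hh
    simp
  | succ T ih =>
    intro h hh
    rw [show playDist F A (T+1) = (playDist F A T).bind _ from rfl, PMF.support_bind] at hh
    rcases Set.mem_iUnion₂.mp hh with ⟨h', hh', hmem⟩
    rw [PMF.support_bind] at hmem
    rcases Set.mem_iUnion₂.mp hmem with ⟨p, hp, hmem2⟩
    rw [PMF.support_map] at hmem2
    rcases hmem2 with ⟨b, _, rfl⟩
    obtain ⟨hlen, hent⟩ := ih h' hh'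
    constructor
    · simp [hlen]
    · intro x hx
      rcases List.mem_append.mp hx with hx1 | hx2
      · exact hent x hx1
      · rcases List.mem_singleton.mp hx2 with rfl
        exact hF h' hp

lemma playDist_length (F : Transcript → PMF ℝ) (A : Transcript → PMF Bool)
    (T : ℕ) (h : Transcript) (hh : h ∈ (playDist F A T).support) : h.length = T :=
  (playDist_support F A Set.univ (fun _ => Set.subset_univ _) T h hh).1

noncomputable def Ah : Transcript → PMF Bool := fun _ => bern (1/2)

noncomputable def g1 (T : ℕ) (h : Transcript) : ℝ :=
  if h.length = T then Wsum h + (T : ℝ)/2 else 0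
noncomputable def g2 (T : ℕ) (h : Transcript) : ℝ :=
  if h.length = T then (Wsum h)^2 else 0
noncomputable def g4 (T : ℕ) (h : Transcript) : ℝ :=
  if h.length = T then (Wsum h)^4 else 0

lemma g1_nonneg (T : ℕ) (h : Transcript) : 0 ≤ g1 T h := by
  unfold g1
  by_cases hl : h.length = T
  · rw [if_pos hl]
    have := abs_Wsum_le h
    rw [hl, abs_le] at this
    linarith [this.1]
  · rw [if_neg hl]

lemma g1_le (T : ℕ) (h : Transcript) : g1 T h ≤ (T : ℝ) := by
  unfold g1
  by_cases hl : h.length = T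
  · rw [if_pos hl]
    have := abs_Wsum_le h
    rw [hl, abs_le] at this
    linarith [this.2]
  · rw [if_neg hl]; positivity

lemma g2_nonneg (T : ℕ) (h : Transcript) : 0 ≤ g2 T h := by
  unfold g2; split <;> positivity

lemma g2_le (T : ℕ) (h : Transcript) : g2 T h ≤ (T : ℝ)^2 := by
  unfold g2
  by_cases hl : h.length = T
  · rw [if_pos hl]
    have h1 := abs_Wsum_le h
    rw [hl] at h1
    nlinarith [abs_nonneg (Wsum h), sq_abs (Wsum h), (Nat.cast_nonneg T : (0:ℝ) ≤ T)]
  · rw [if_neg hl]; positivity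

lemma g4_nonneg (T : ℕ) (h : Transcript) : 0 ≤ g4 T h := by
  unfold g4; split <;> positivity

lemma g4_le (T : ℕ) (h : Transcript) : g4 T h ≤ (T : ℝ)^4 := by
  unfold g4
  by_cases hl : h.length = T
  · rw [if_pos hl]
    have h1 := abs_Wsum_le h
    rw [hl] at h1
    have hW2 : (Wsum h)^2 ≤ (T:ℝ)^2/4 := by
      nlinarith [abs_nonneg (Wsum h), sq_abs (Wsum h), (Nat.cast_nonneg T : (0:ℝ) ≤ T)]
    nlinarith [sq_nonneg (Wsum h), sq_nonneg ((T:ℝ)), (Nat.cast_nonneg T : (0:ℝ) ≤ T)]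
  · rw [if_neg hl]; positivity

lemma yval_true_neg (p : ℝ) : yval (p, true) = - yval (p, false) := by
  unfold yval; norm_num

lemma yval_sq (p : ℝ) (b : Bool) : (yval (p, b))^2 = 1/4 := by
  unfold yval
  cases b <;> · simp only []
                ring_nf
                rw [sg_sq] <;> norm_num

lemma pexp_step (F : Transcript → PMF ℝ) (T : ℕ) (g : Transcript → ℝ) (C : ℝ)
    (h0 : ∀ h, 0 ≤ g h) (hC : ∀ h, g h ≤ C) :
    pexp (playDist F Ah (T+1)) g
      = pexp (playDist F Ah T)
          (fun h => pexp (F h)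
            (fun p => (g (h ++ [(p,true)]) + g (h ++ [(p,false)])) / 2)) := by
  rw [show playDist F Ah (T+1) = (playDist F Ah T).bind
      (fun h => (F h).bind fun p => (Ah h).map fun b => h ++ [(p, b)]) from rfl]
  rw [pexp_bind _ _ g C h0 hC]
  apply pexp_congr
  intro h _
  rw [pexp_bind _ _ g C h0 hC]
  apply pexp_congr
  intro p _
  rw [pexp_map _ _ g C h0 hC]
  exact pexp_bern_half (fun b => g (h ++ [(p, b)]))

lemma E_g1 (F : Transcript → PMF ℝ) (T : ℕ) :
    pexp (playDist F Ah T) (g1 T) = (T : ℝ)/2 := by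
  induction T with
  | zero =>
    rw [show playDist F Ah 0 = PMF.pure [] from rfl, pexp_pure]
    simp [g1, Wsum]
  | succ T ih =>
    rw [pexp_step F T (g1 (T+1)) ((T+1 : ℕ) : ℝ) (g1_nonneg _) (g1_le _)]
    have hcongr : pexp (playDist F Ah T)
        (fun h => pexp (F h)
          (fun p => (g1 (T+1) (h ++ [(p,true)]) + g1 (T+1) (h ++ [(p,false)])) / 2))
        = pexp (playDist F Ah T) (fun h => g1 T h + 1/2) := by
      apply pexp_congr
      intro h hm
      have hl : h.length = T := playDist_length F Ah T h hm
      have hval : ∀ p b, g1 (T+1) (h ++ [(p,b)]) = Wsum h + yval (p,b) + ((T:ℝ)+1)/2 := by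
        intro p b
        rw [g1, if_pos (by simp [hl]), Wsum_append]
        push_cast
        ring
      have : (fun p : ℝ => (g1 (T+1) (h ++ [(p,true)]) + g1 (T+1) (h ++ [(p,false)])) / 2)
          = fun _ => Wsum h + ((T:ℝ)+1)/2 := by
        funext p
        rw [hval p true, hval p false, yval_true_neg]
        ring
      rw [this, pexp_const, g1, if_pos hl]
      ring
    rw [hcongr, pexp_add_const _ (g1 T) (1/2) (T:ℝ)
      (fun h _ => by rw [abs_of_nonneg (g1_nonneg T h)]; exact g1_le T h), ih]
    push_cast
    ring

lemma E_g2 (F : Transcript → PMF ℝ) (T : ℕ) :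
    pexp (playDist F Ah T) (g2 T) = (T : ℝ)/4 := by
  induction T with
  | zero =>
    rw [show playDist F Ah 0 = PMF.pure [] from rfl, pexp_pure]
    simp [g2, Wsum]
  | succ T ih =>
    rw [pexp_step F T (g2 (T+1)) (((T+1 : ℕ) : ℝ)^2) (g2_nonneg _) (g2_le _)]
    have hcongr : pexp (playDist F Ah T)
        (fun h => pexp (F h)
          (fun p => (g2 (T+1) (h ++ [(p,true)]) + g2 (T+1) (h ++ [(p,false)])) / 2))
        = pexp (playDist F Ah T) (fun h => g2 T h + 1/4) := by
      apply pexp_congr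
      intro h hm
      have hl : h.length = T := playDist_length F Ah T h hm
      have hval : ∀ p b, g2 (T+1) (h ++ [(p,b)]) = (Wsum h + yval (p,b))^2 := by
        intro p b
        rw [g2, if_pos (by simp [hl]), Wsum_append]
      have : (fun p : ℝ => (g2 (T+1) (h ++ [(p,true)]) + g2 (T+1) (h ++ [(p,false)])) / 2)
          = fun _ => (Wsum h)^2 + 1/4 := by
        funext p
        rw [hval p true, hval p false, yval_true_neg]
        have h2 := yval_sq p false
        linear_combination h2
      rw [this, pexp_const, g2, if_pos hl]
    rw [hcongr, pexp_add_const _ (g2 T) (1/4) ((T:ℝ)^2)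
      (fun h _ => by rw [abs_of_nonneg (g2_nonneg T h)]; exact g2_le T h), ih]
    push_cast
    ring

lemma E_g4 (F : Transcript → PMF ℝ) (T : ℕ) :
    pexp (playDist F Ah T) (g4 T) ≤ 3*(T : ℝ)^2/16 := by
  induction T with
  | zero =>
    rw [show playDist F Ah 0 = PMF.pure [] from rfl, pexp_pure]
    simp [g4, Wsum]
  | succ T ih =>
    rw [pexp_step F T (g4 (T+1)) (((T+1 : ℕ) : ℝ)^4) (g4_nonneg _) (g4_le _)]
    have hcongr : pexp (playDist F Ah T)
        (fun h => pexp (F h)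
          (fun p => (g4 (T+1) (h ++ [(p,true)]) + g4 (T+1) (h ++ [(p,false)])) / 2))
        = pexp (playDist F Ah T) (fun h => (g4 T h + (3/2) * g2 T h) + 1/16) := by
      apply pexp_congr
      intro h hm
      have hl : h.length = T := playDist_length F Ah T h hm
      have hval : ∀ p b, g4 (T+1) (h ++ [(p,b)]) = (Wsum h + yval (p,b))^4 := by
        intro p b
        rw [g4, if_pos (by simp [hl]), Wsum_append]
      have : (fun p : ℝ => (g4 (T+1) (h ++ [(p,true)]) + g4 (T+1) (h ++ [(p,false)])) / 2)
          = fun _ => ((Wsum h)^4 + (3/2) * (Wsum h)^2) + 1/16 := by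
        funext p
        rw [hval p true, hval p false, yval_true_neg]
        have h2 := yval_sq p false
        linear_combination ((Wsum h)^2 * 6 + (yval (p,false))^2 + 1/4) * h2
      rw [this, pexp_const, g4, if_pos hl, g2, if_pos hl]
    have hbnd : ∀ h' ∈ (playDist F Ah T).support,
        |g4 T h' + (3/2) * g2 T h'| ≤ (T:ℝ)^4 + (3/2)*(T:ℝ)^2 := by
      intro h' _
      have h1 := g4_nonneg T h'
      have h2 := g2_nonneg T h'
      have h3 := g4_le T h'
      have h4 := g2_le T h'
      rw [abs_of_nonneg (by linarith)]
      linarith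
    have hadd : pexp (playDist F Ah T) (fun h => g4 T h + (3/2) * g2 T h)
        = pexp (playDist F Ah T) (g4 T) + (3/2) * pexp (playDist F Ah T) (g2 T) := by
      rw [pexp_add _ _ _ (pexp_summable _ _ ((T:ℝ)^4)
          (fun h _ => by rw [abs_of_nonneg (g4_nonneg T h)]; exact g4_le T h))
        (pexp_summable _ _ ((3/2)*(T:ℝ)^2)
          (fun h _ => by
            rw [abs_of_nonneg (mul_nonneg (by norm_num) (g2_nonneg T h))]
            exact mul_le_mul_of_nonneg_left (g2_le T h) (by norm_num)))]
      rw [pexp_smul]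
    rw [hcongr, pexp_add_const _ (fun h => g4 T h + (3/2) * g2 T h) (1/16)
      ((T:ℝ)^4 + (3/2)*(T:ℝ)^2) hbnd, hadd, E_g2]
    have hT0 : (0:ℝ) ≤ (T:ℝ) := Nat.cast_nonneg T
    push_cast
    nlinarith [ih]


end CalProof

open CalProof

/-- There is a universal constant `c > 0` such that for every horizon `T ≥ 1`:
if the adversary outputs `T` independent uniform bits (independent of the forecaster's
predictions), then every (possibly randomized, adaptive) forecaster satisfies
`E[calerr(T)] ≥ c·√T`. -/
theorem uniform_bits_sqrt_lower_bound :
    ∃ c : ℝ, 0 < c ∧ ∀ T : ℕ, 1 ≤ T →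
      ∀ P : Finset ℝ, (P : Set ℝ) ⊆ Set.Icc 0 1 →
      ∀ F : Transcript → PMF ℝ, (∀ h, (F h).support ⊆ (P : Set ℝ)) →
        c * Real.sqrt T ≤ expCalErr F (fun _ => bern (1 / 2)) T := by
  refine ⟨1/12, by norm_num, ?_⟩
  intro T hT P hP F hF
  have hEC : expCalErr F (fun _ => bern (1/2)) T = pexp (playDist F Ah T) calErr := rfl
  set μ := playDist F Ah T with hμ
  have hsub : ∀ h ∈ μ.support, h.length = T ∧ ∀ x ∈ h, x.1 ∈ Set.Icc (0:ℝ) 1 := by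
    intro h hm
    obtain ⟨hl, he⟩ := playDist_support F Ah (P : Set ℝ) hF T h hm
    exact ⟨hl, fun x hx => hP (he x hx)⟩
  -- summability facts
  have sW : Summable (fun h => (μ h).toReal * Wsum h) :=
    pexp_summable μ Wsum ((T:ℝ)/2) (fun h hm => by
      rw [show ((T:ℝ)/2) = ((h.length : ℝ)/2) by rw [(hsub h hm).1]]
      exact abs_Wsum_le h)
  have sabsW : Summable (fun h => (μ h).toReal * |Wsum h|) :=
    pexp_summable μ _ ((T:ℝ)/2) (fun h hm => by
      rw [abs_abs, show ((T:ℝ)/2) = ((h.length : ℝ)/2) by rw [(hsub h hm).1]]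
      exact abs_Wsum_le h)
  have sD : Summable (fun h => (μ h).toReal * Dsum h) :=
    pexp_summable μ Dsum ((T:ℝ)/2) (fun h hm => by
      rw [abs_of_nonneg (Dsum_nonneg h),
        show ((T:ℝ)/2) = ((h.length : ℝ)/2) by rw [(hsub h hm).1]]
      exact Dsum_le h (hsub h hm).2)
  have snegD : Summable (fun h => (μ h).toReal * ((-1) * Dsum h)) :=
    pexp_summable μ _ ((T:ℝ)/2) (fun h hm => by
      rw [show |(-1) * Dsum h| = |Dsum h| by rw [abs_mul]; simp]
      rw [abs_of_nonneg (Dsum_nonneg h),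
        show ((T:ℝ)/2) = ((h.length : ℝ)/2) by rw [(hsub h hm).1]]
      exact Dsum_le h (hsub h hm).2)
  have sWD : Summable (fun h => (μ h).toReal * (Wsum h + Dsum h)) :=
    pexp_summable μ _ ((T:ℝ)) (fun h hm => by
      have h1 := abs_add_le (Wsum h) (Dsum h)
      have h2 := abs_Wsum_le h
      have h3 := Dsum_le h (hsub h hm).2
      have h4 := Dsum_nonneg h
      rw [abs_of_nonneg h4] at h1
      have hl := (hsub h hm).1
      rw [hl] at h2 h3
      linarith)
  have sabsWD : Summable (fun h => (μ h).toReal * (|Wsum h| - Dsum h)) :=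
    pexp_summable μ _ ((T:ℝ)) (fun h hm => by
      have h2 := abs_Wsum_le h
      have h3 := Dsum_le h (hsub h hm).2
      have h4 := Dsum_nonneg h
      have hl := (hsub h hm).1
      rw [hl] at h2 h3
      rw [abs_le]
      constructor <;> [skip; skip] <;>
        · have := abs_nonneg (Wsum h); first
            | linarith
            | linarith)
  have scal : Summable (fun h => (μ h).toReal * calErr h) :=
    pexp_summable μ calErr (2*(T:ℝ)) (fun h hm => by
      rw [abs_of_nonneg (calErr_nonneg h)]
      have := calErr_le h (hsub h hm).2
      rw [(hsub h hm).1] at this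
      exact this)
  -- step 1 : E[calErr] ≥ E[W + D] and ≥ E[|W|] - E[D]
  have h1 : pexp μ (fun h => Wsum h + Dsum h) ≤ pexp μ calErr :=
    pexp_mono μ _ _ sWD scal (fun h _ => by
      have hG := abs_Gsum_le_calErr h
      rw [Gsum_eq] at hG
      exact le_trans (le_abs_self _) hG)
  have h2 : pexp μ (fun h => |Wsum h| - Dsum h) ≤ pexp μ calErr :=
    pexp_mono μ _ _ sabsWD scal (fun h _ => by
      have hG := abs_Gsum_le_calErr h
      rw [Gsum_eq] at hG
      have hD := Dsum_nonneg h
      have key : |Wsum h| ≤ |Wsum h + Dsum h| + Dsum h := by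
        have h3 := abs_add_le (Wsum h + Dsum h) (-(Dsum h))
        rw [abs_neg, abs_of_nonneg hD] at h3
        simpa using h3
      linarith)
  have hA : pexp μ (fun h => Wsum h + Dsum h) = pexp μ Wsum + pexp μ Dsum :=
    pexp_add μ _ _ sW sD
  have hB : pexp μ (fun h => |Wsum h| - Dsum h)
      = pexp μ (fun h => |Wsum h|) - pexp μ Dsum := by
    have heq : (fun h => |Wsum h| - Dsum h) = fun h => |Wsum h| + (-1) * Dsum h := by
      funext h; ring
    rw [heq, pexp_add μ _ _ sabsW snegD, pexp_smul]
    ring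
  have hW0 : pexp μ Wsum = 0 := by
    have hc : pexp μ Wsum = pexp μ (fun h => g1 T h + (-((T:ℝ)/2))) := by
      apply pexp_congr
      intro h hm
      rw [g1, if_pos (hsub h hm).1]
      ring
    rw [hc, pexp_add_const μ (g1 T) _ (T:ℝ)
      (fun h _ => by rw [abs_of_nonneg (g1_nonneg T h)]; exact g1_le T h), hμ, E_g1]
    ring
  have hkey : pexp μ (fun h => |Wsum h|) ≤ 2 * pexp μ calErr := by
    linarith [h1, h2, hA, hB, hW0]
  clear sW sabsW sD snegD sWD sabsWD scal h1 h2 hA hB hW0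
  -- sqrt bookkeeping
  have hT1 : (1:ℝ) ≤ (T:ℝ) := by exact_mod_cast hT
  set t := Real.sqrt (T:ℝ) with htdef
  have ht0 : 0 < t := Real.sqrt_pos.mpr (by linarith)
  have ht2 : t^2 = (T:ℝ) := Real.sq_sqrt (by linarith)
  set s := Real.sqrt 3 with hsdef
  have hs2 : s^2 = 3 := Real.sq_sqrt (by norm_num)
  have hs1 : 1 ≤ s := by nlinarith [Real.sqrt_nonneg 3]
  have hs0 : (0:ℝ) ≤ s := by linarith
  -- pointwise polynomial lower bound for |w|
  have hpoly : ∀ w : ℝ, 9*s*t^2*w^2 - 4*s*w^4 ≤ 9*t^3*|w| := by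
    intro w
    have hu0 : 0 ≤ |w| := abs_nonneg w
    have hw2 : w^2 = |w|^2 := (sq_abs w).symm
    have hw4 : w^4 = |w|^4 := by
      rw [show (4:ℕ) = 2*2 from rfl, pow_mul, pow_mul, sq_abs]
    rw [hw2, hw4]
    set u := |w| with hu
    have key : 4*s*u^4 + 9*t^3*u - 9*s*t^2*u^2 = u*s*((2*u - s*t)^2*(u + s*t)) := by
      linear_combination (3*s*t^2*u^2 - t^3*u*(s^2+3)) * hs2
    have hust : (0:ℝ) ≤ u + s*t := by nlinarith
    nlinarith [key, mul_nonneg (mul_nonneg hu0 hs0)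
      (mul_nonneg (sq_nonneg (2*u - s*t)) hust)]
  -- fourth-moment comparison
  have hcoef2 : (0:ℝ) ≤ 9*s*t^2 := by nlinarith [sq_nonneg t]
  have hcoef4 : (0:ℝ) ≤ 4*s := by linarith
  have sg24 : Summable (fun h => (μ h).toReal * (9*s*t^2 * g2 T h - 4*s * g4 T h)) :=
    pexp_summable μ _ (9*s*t^2*(T:ℝ)^2 + 4*s*(T:ℝ)^4) (fun h _ => by
      have c1 : 9*s*t^2 * g2 T h ≤ 9*s*t^2 * (T:ℝ)^2 :=
        mul_le_mul_of_nonneg_left (g2_le T h) hcoef2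
      have c2 : 4*s * g4 T h ≤ 4*s * (T:ℝ)^4 :=
        mul_le_mul_of_nonneg_left (g4_le T h) hcoef4
      have c3 : 0 ≤ 9*s*t^2 * g2 T h := mul_nonneg hcoef2 (g2_nonneg T h)
      have c4 : 0 ≤ 4*s * g4 T h := mul_nonneg hcoef4 (g4_nonneg T h)
      rw [abs_le]
      constructor <;> linarith)
  have s2g2 : Summable (fun h => (μ h).toReal * ((9*s*t^2) * g2 T h)) :=
    pexp_summable μ _ (9*s*t^2*(T:ℝ)^2) (fun h _ => by
      rw [abs_of_nonneg (mul_nonneg hcoef2 (g2_nonneg T h))]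
      exact mul_le_mul_of_nonneg_left (g2_le T h) hcoef2)
  have s2g4 : Summable (fun h => (μ h).toReal * ((-(4*s)) * g4 T h)) :=
    pexp_summable μ _ (4*s*(T:ℝ)^4) (fun h _ => by
      have habs : |(-(4*s)) * g4 T h| = |4*s * g4 T h| := by
        rw [abs_mul, abs_mul]; simp
      rw [habs, abs_of_nonneg (mul_nonneg hcoef4 (g4_nonneg T h))]
      exact mul_le_mul_of_nonneg_left (g4_le T h) hcoef4)
  have sRHS : Summable (fun h => (μ h).toReal * (9*t^3 * |Wsum h|)) :=
    pexp_summable μ _ (9*t^3*((T:ℝ)/2)) (fun h hm => by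
      have hcoef : (0:ℝ) ≤ 9*t^3 := by positivity
      rw [abs_of_nonneg (mul_nonneg hcoef (abs_nonneg (Wsum h)))]
      apply mul_le_mul_of_nonneg_left _ hcoef
      rw [show ((T:ℝ)/2) = ((h.length : ℝ)/2) by rw [(hsub h hm).1]]
      exact abs_Wsum_le h)
  have hmono : pexp μ (fun h => 9*s*t^2 * g2 T h - 4*s * g4 T h)
      ≤ pexp μ (fun h => 9*t^3 * |Wsum h|) :=
    pexp_mono μ _ _ sg24 sRHS (fun h hm => by
      have hl := (hsub h hm).1
      rw [g2, if_pos hl, g4, if_pos hl]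
      exact hpoly (Wsum h))
  have hlin2 : pexp μ (fun h => 9*s*t^2 * g2 T h - 4*s * g4 T h)
      = 9*s*t^2 * pexp μ (g2 T) - 4*s * pexp μ (g4 T) := by
    have heq : (fun h => 9*s*t^2 * g2 T h - 4*s * g4 T h)
        = fun h => (9*s*t^2) * g2 T h + (-(4*s)) * g4 T h := by
      funext h; ring
    rw [heq, pexp_add μ _ _ s2g2 s2g4, pexp_smul, pexp_smul]
    ring
  have hlin3 : pexp μ (fun h => 9*t^3 * |Wsum h|)
      = 9*t^3 * pexp μ (fun h => |Wsum h|) := pexp_smul μ _ _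
  have hg2v : pexp μ (g2 T) = (T:ℝ)/4 := by rw [hμ]; exact E_g2 F T
  have hg4v : pexp μ (g4 T) ≤ 3*(T:ℝ)^2/16 := by rw [hμ]; exact E_g4 F T
  have hEabsW : s*t/6 ≤ pexp μ (fun h => |Wsum h|) := by
    have h5 := hmono
    rw [hlin2, hlin3, hg2v] at h5
    have h8 : 4*s*pexp μ (g4 T) ≤ 4*s*(3*(T:ℝ)^2/16) :=
      mul_le_mul_of_nonneg_left hg4v hcoef4
    have h7 : (T:ℝ) = t^2 := ht2.symm
    rw [h7] at h5 h8
    have h9 : (3/2)*s*t^4 ≤ 9*t^3 * pexp μ (fun h => |Wsum h|) := by linarith [h5, h8]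
    have h11 : (3/2)*s*t^4/(9*t^3) ≤ pexp μ (fun h => |Wsum h|) :=
      (div_le_iff₀ (by positivity)).mpr (by linarith [h9])
    have h12 : (3/2)*s*t^4/(9*t^3) = s*t/6 := by
      field_simp
      ring
    rw [h12] at h11
    exact h11
  rw [hEC]
  have hfin : s*t/12 ≤ pexp μ calErr := by linarith [hkey, hEabsW]
  have : t/12 ≤ s*t/12 := by nlinarith [ht0, hs1]
  calc (1:ℝ)/12 * t = t/12 := by ring
    _ ≤ pexp μ calErr := by linarith
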